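/- Let G be a finite DAG and u, v ∈ V, S ⊆ V, z ∈ V with u, v ∉ S ∪ {z}. If u and v are d-separated given S but d-connected given S ∪ {z}, then neither u nor v is an element of Des[z] (the descendants of z together with z itself). -/

import Mathlib

open Relation

/-- Undirected adjacency induced by a directed edge relation. -/
def Adjacent {V : Type*} (E : V → V → Prop) (a b : V) : Prop := E a b ∨ E b a

/-- `x` is a collider on the path (vertex list) `p`: both neighboring edges point into `x`. -/
def IsCollider {V : Type*} (E : V → V → Prop) (p : List V) (x : V) : Prop :=
  ∃ l1 a b l2, p = l1 ++ a :: x :: b :: l2 ∧ E a x ∧ E b x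

/-- A path (vertex list) is active given a conditioning set `C`:
every collider is in `C` or has a descendant in `C`, and no non-collider is in `C`. -/
def ActivePath {V : Type*} (E : V → V → Prop) (C : Set V) (p : List V) : Prop :=
  (∀ x ∈ p, IsCollider E p x → ∃ d, ReflTransGen E x d ∧ d ∈ C) ∧
  (∀ x ∈ p, ¬ IsCollider E p x → x ∉ C)

/-- `p` is a path between `u` and `v`: consecutively adjacent, distinct vertices. -/
def IsPathBetween {V : Type*} (E : V → V → Prop) (u v : V) (p : List V) : Prop :=
  p.Chain' (Adjacent E) ∧ p.Nodup ∧ p.head? = some u ∧ p.getLast? = some v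

/-- `u` and `v` are d-connected given `C`. -/
def DConn {V : Type*} (E : V → V → Prop) (C : Set V) (u v : V) : Prop :=
  ∃ p, IsPathBetween E u v p ∧ ActivePath E C p

/-- `u` and `v` are d-separated given `C`. -/
def DSep {V : Type*} (E : V → V → Prop) (C : Set V) (u v : V) : Prop :=
  ¬ DConn E C u v

/-- `S` is a prefix (ancestrally closed) subset. -/
def IsPrefixSet {V : Type*} (E : V → V → Prop) (S : Set V) : Prop :=
  ∀ u v, E u v → v ∈ S → u ∈ S

/-- Source vertices of the induced subgraph on `T`: vertices of `T` with no parent in `T`. -/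
def srcOf {V : Type*} (E : V → V → Prop) (T : Set V) : Set V :=
  {v | v ∈ T ∧ ∀ u, E u v → u ∉ T}

/-- The edge relation is acyclic. -/
def Acyclic {V : Type*} (E : V → V → Prop) : Prop :=
  ∀ v, ¬ TransGen E v v

/-- `p` is a directed path from `u` to `v` (all edges forward). -/
def DirPath {V : Type*} (E : V → V → Prop) (u v : V) (p : List V) : Prop :=
  p.Chain' E ∧ p.head? = some u ∧ p.getLast? = some v

/-!
Suppose `z` is an ancestor of `u` (the case of `v` follows by reversing paths) and let `p` be a
path from `u` to `v` that is active given `S ∪ {z}`. A collider on `p` with no descendant in `S`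
is then an ancestor of `z`, hence of `u`; call such colliders blocking. For a blocking collider
`c`, follow a directed path from `c` down to `u` and let `t` be its last vertex on the part of `p`
from `c` onwards. Walking this directed path backwards from `u` to `t` and then along `p` to `v`
gives a new path: its new vertices are descendants of `c`, hence outside `S`, and by acyclicity
none of them is a collider, while the vertices after `t` keep their neighbours. So `c` has
disappeared and no blocking collider was created; repeating this ends with a path that is active
given `S`, contradicting `u ⫫ v ∣ S`.
-/

def WeaklyActivePath {V : Type*} (E : V → V → Prop) (S : Set V) (u : V) (p : List V) : Prop :=
  (∀ x ∈ p, IsCollider E p x →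
    (∃ d, ReflTransGen E x d ∧ d ∈ S) ∨ ReflTransGen E x u) ∧
  (∀ x ∈ p, ¬ IsCollider E p x → x ∉ S)

def blockingColliders {V : Type*} (E : V → V → Prop) (S : Set V) (p : List V) : Set V :=
  {x | x ∈ p ∧ IsCollider E p x ∧ ¬ ∃ d, ReflTransGen E x d ∧ d ∈ S}

section

variable {V : Type*} {E : V → V → Prop}

lemma Acyclic.asymm (hacyc : Acyclic E) {a b : V} (hab : E a b) : ¬ E b a :=
  fun hba => hacyc a (.tail (.single hab) hba)

lemma List.IsChain.reflTransGen_of_mem {b x : V} {l : List V} (h : (b :: l).IsChain E)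
    (hx : x ∈ b :: l) : ReflTransGen E b x :=
  h.induction (ReflTransGen E b) _ (fun _ _ hyz hby => hby.tail hyz) (fun _ => .refl) x hx

lemma Acyclic.nodup_of_isChain (hacyc : Acyclic E) : ∀ {l : List V}, l.IsChain E → l.Nodup
  | [], _ => List.nodup_nil
  | [b], _ => List.nodup_singleton b
  | b :: y :: l, h => by
    rw [List.isChain_cons_cons] at h
    refine List.nodup_cons.2 ⟨fun hb => hacyc b ?_, hacyc.nodup_of_isChain h.2⟩
    exact .head' h.1 (h.2.reflTransGen_of_mem hb)

lemma List.exists_eq_append_cons_of_last {P : V → Prop} :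
    ∀ {l : List V}, (∃ x ∈ l, P x) →
      ∃ l₁ t l₂, l = l₁ ++ t :: l₂ ∧ P t ∧ ∀ x ∈ l₂, ¬ P x
  | [], ⟨_, hx, _⟩ => absurd hx List.not_mem_nil
  | a :: l, h => by
    by_cases hl : ∃ x ∈ l, P x
    · obtain ⟨l₁, t, l₂, rfl, ht, hl₂⟩ := exists_eq_append_cons_of_last hl
      exact ⟨a :: l₁, t, l₂, rfl, ht, hl₂⟩
    · obtain ⟨x, hx, hPx⟩ := h
      have ha : P a := by
        rcases List.mem_cons.1 hx with rfl | hx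
        · exact hPx
        · exact absurd ⟨x, hx, hPx⟩ hl
      exact ⟨[], a, l, rfl, ha, fun x hx hPx => hl ⟨x, hx, hPx⟩⟩

lemma List.Nodup.not_mem_of_cons_suffix {a t : V} {l s : List V} (hnd : (a :: l).Nodup)
    (h : t :: s <:+ a :: l) : a ∉ s := by
  have ha := (List.nodup_cons.1 hnd).1
  rcases List.suffix_cons_iff.1 h with h | h
  · exact (List.cons.inj h).2 ▸ ha
  · exact fun has => ha (((List.suffix_cons t s).trans h).subset has)

lemma isCollider_iff_of_eq_append_cons {p s r : List V} {x : V} (hnd : p.Nodup)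
    (h : p = s ++ x :: r) :
    IsCollider E p x ↔ ∃ a b, s.getLast? = some a ∧ r.head? = some b ∧ E a x ∧ E b x := by
  subst h
  have hx : x ∉ s ++ r := (List.nodup_cons.1 (List.nodup_middle.1 hnd)).1
  rw [List.mem_append, not_or] at hx
  constructor
  · rintro ⟨l₁, a, b, l₂, hp, hax, hbx⟩
    rw [show l₁ ++ a :: x :: b :: l₂ = (l₁ ++ [a]) ++ x :: b :: l₂ by simp,
      List.append_cons_inj_of_notMem hx.1 hx.2] at hp
    obtain ⟨rfl, -, rfl⟩ := hp
    exact ⟨a, b, List.getLast?_concat, rfl, hax, hbx⟩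
  · rintro ⟨a, b, ha, hb, hax, hbx⟩
    obtain ⟨s', rfl⟩ := List.getLast?_eq_some_iff.1 ha
    obtain ⟨r', rfl⟩ := List.head?_eq_some_iff.1 hb
    exact ⟨s', a, b, r', by simp, hax, hbx⟩

lemma isCollider_append_iff {l m : List V} {x : V} (hnd : (l ++ m).Nodup) (hx : x ∈ m.tail) :
    IsCollider E (l ++ m) x ↔ IsCollider E m x := by
  obtain _ | ⟨y, m⟩ := m
  · exact absurd hx List.not_mem_nil
  obtain ⟨s, r, rfl⟩ := List.append_of_mem hx
  rw [isCollider_iff_of_eq_append_cons hnd (s := l ++ y :: s) (r := r) (by simp),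
    isCollider_iff_of_eq_append_cons hnd.of_append_right (s := y :: s) (r := r) (by simp),
    List.getLast?_append_cons]

lemma isCollider_reverse_iff {p : List V} {x : V} :
    IsCollider E p.reverse x ↔ IsCollider E p x := by
  suffices ∀ {p : List V}, IsCollider E p x → IsCollider E p.reverse x from
    ⟨fun h => p.reverse_reverse ▸ this h, this⟩
  rintro p ⟨l₁, a, b, l₂, rfl, hax, hbx⟩
  exact ⟨l₂.reverse, b, a, l₁.reverse, by simp, hbx, hax⟩

lemma IsPathBetween.reverse {u v : V} {p : List V} (hp : IsPathBetween E u v p) :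
    IsPathBetween E v u p.reverse := by
  obtain ⟨hch, hnd, hu, hv⟩ := hp
  refine ⟨List.isChain_reverse.2 (hch.imp fun _ _ h => h.symm), List.nodup_reverse.2 hnd,
    ?_, ?_⟩
  · rwa [List.head?_reverse]
  · rwa [List.getLast?_reverse]

lemma ActivePath.reverse {C : Set V} {p : List V} (hp : ActivePath E C p) :
    ActivePath E C p.reverse := by
  simp only [ActivePath, List.mem_reverse, isCollider_reverse_iff]
  exact hp

lemma DConn.symm {C : Set V} {u v : V} (h : DConn E C u v) : DConn E C v u :=
  let ⟨p, hp, ha⟩ := h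
  ⟨p.reverse, hp.reverse, ha.reverse⟩

lemma not_isCollider_reverse_append (hacyc : Acyclic E) {t x : V} {r s : List V}
    (hd : (t :: r).IsChain E) (hnd : (r.reverse ++ t :: s).Nodup) (hx : x ∈ t :: r) :
    ¬ IsCollider E (r.reverse ++ t :: s) x := by
  obtain ⟨A₁, A₂, hA⟩ := List.append_of_mem (List.mem_reverse.2 hx)
  have hw : r.reverse ++ t :: s = A₁ ++ x :: (A₂ ++ s) := by
    simpa using congrArg (· ++ s) hA
  rw [isCollider_iff_of_eq_append_cons hnd hw]
  rintro ⟨a, b, ha, -, hax, -⟩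
  obtain ⟨A₁, rfl⟩ := List.getLast?_eq_some_iff.1 ha
  have hxa : [x, a] <:+: t :: r :=
    ⟨A₂.reverse, A₁.reverse, by rw [← List.reverse_reverse (t :: r), hA]; simp⟩
  exact hacyc.asymm hax (List.isChain_pair.1 (hd.infix hxa))

lemma isPathBetween_reverse_append (hacyc : Acyclic E) {u v w t : V} {l r s : List V}
    (hp : IsPathBetween E w v (l ++ t :: s)) (hd : (t :: r).IsChain E)
    (hdu : (t :: r).getLast? = some u) (hdisj : ∀ x ∈ r, x ∉ t :: s) :
    IsPathBetween E u v (r.reverse ++ t :: s) := by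
  obtain ⟨hch, hnd, -, hv⟩ := hp
  have hrev : r.reverse ++ t :: s = (t :: r).reverse ++ s := by simp
  refine ⟨?_, ?_, ?_, by rwa [List.getLast?_append_cons, ← List.getLast?_append_cons l]⟩
  · have hr : (r.reverse ++ [t]).IsChain (Adjacent E) := by
      rw [← List.reverse_cons, List.isChain_reverse]
      exact hd.imp fun _ _ h => Or.inr h
    have h := hr.append_overlap (hch.suffix ⟨l, rfl⟩) (List.cons_ne_nil _ _)
    rwa [List.append_assoc, List.singleton_append] at h
  · have hr : r.Nodup := (List.nodup_cons.1 (hacyc.nodup_of_isChain hd)).2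
    exact List.nodup_append.2 ⟨List.nodup_reverse.2 hr, hnd.of_append_right,
      fun x hx y hy hxy => hdisj x (List.mem_reverse.1 hx) (hxy ▸ hy)⟩
  · rw [hrev, List.head?_append_of_ne_nil _ (by simp), List.head?_reverse, hdu]

lemma blockingColliders_finite (S : Set V) (p : List V) : (blockingColliders E S p).Finite :=
  p.finite_toSet.subset fun _ hx => hx.1

lemma IsPathBetween.exists_reroute (hacyc : Acyclic E) {u v c : V} {p : List V}
    (hp : IsPathBetween E u v p) (hcp : c ∈ p) (hcu : ReflTransGen E c u) :
    ∃ w, IsPathBetween E u v w ∧ ∀ x ∈ w, (ReflTransGen E c x ∧ ¬ IsCollider E w x) ∨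
      (x ∈ p ∧ x ≠ c ∧ (IsCollider E w x ↔ IsCollider E p x)) := by
  obtain ⟨q, hq, hqu⟩ := List.exists_isChain_cons_of_relationReflTransGen hcu
  obtain ⟨l₁, l₂, hpc⟩ := List.append_of_mem hcp
  obtain ⟨q₁, t, r, hq_eq, ht, hr⟩ :=
    List.exists_eq_append_cons_of_last (P := (· ∈ c :: l₂))
      ⟨c, List.mem_cons_self, List.mem_cons_self⟩
  obtain ⟨s₁, s, hseg⟩ := List.append_of_mem ht
  have hps : p = (l₁ ++ s₁) ++ t :: s := by rw [hpc, hseg, List.append_assoc]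
  have hd : (t :: r).IsChain E := hq.suffix ⟨q₁, hq_eq.symm⟩
  have hdu : (t :: r).getLast? = some u := by
    rw [← List.getLast?_append_cons q₁, ← hq_eq, List.getLast?_eq_getLast_of_ne_nil, hqu]
    exact List.cons_ne_nil _ _
  have hw := isPathBetween_reverse_append hacyc (hps ▸ hp) hd hdu
    fun x hx hxs => hr x hx (hseg ▸ List.mem_append_right s₁ hxs)
  have hcs : c ∉ s :=
    List.Nodup.not_mem_of_cons_suffix (hpc ▸ hp.2.1).of_append_right ⟨s₁, hseg.symm⟩
  refine ⟨_, hw, fun x hx => ?_⟩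
  rw [List.mem_append, List.mem_reverse, List.mem_cons] at hx
  obtain hx | rfl | hx := hx
  · exact .inl ⟨hq.reflTransGen_of_mem (hq_eq ▸ by simp [hx]),
      not_isCollider_reverse_append hacyc hd hw.2.1 (List.mem_cons_of_mem t hx)⟩
  · exact .inl ⟨hq.reflTransGen_of_mem (hq_eq ▸ by simp),
      not_isCollider_reverse_append hacyc hd hw.2.1 List.mem_cons_self⟩
  · refine .inr ⟨by simp [hps, hx], fun h => hcs (h ▸ hx), ?_⟩
    rw [isCollider_append_iff hw.2.1 hx, hps, isCollider_append_iff (hps ▸ hp.2.1) hx]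

lemma exists_blockingColliders_ssubset (hacyc : Acyclic E) {S : Set V} {u v c : V} {p : List V}
    (hp : IsPathBetween E u v p) (ha : WeaklyActivePath E S u p)
    (hc : c ∈ blockingColliders E S p) :
    ∃ w, IsPathBetween E u v w ∧ WeaklyActivePath E S u w ∧
      blockingColliders E S w ⊂ blockingColliders E S p := by
  obtain ⟨hcp, hccol, hcS⟩ := hc
  obtain ⟨w, hw, hwp⟩ := hp.exists_reroute hacyc hcp ((ha.1 c hcp hccol).resolve_left hcS)
  have hcol : ∀ x ∈ w, IsCollider E w x → x ∈ p ∧ x ≠ c ∧ IsCollider E p x := by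
    intro x hx hxw
    obtain ⟨-, hxw'⟩ | ⟨hxp, hxc, hiff⟩ := hwp x hx
    · exact absurd hxw hxw'
    · exact ⟨hxp, hxc, hiff.1 hxw⟩
  refine ⟨w, hw, ⟨fun x hx hxw => ?_, fun x hx hxw hxS => ?_⟩, ?_⟩
  · obtain ⟨hxp, -, hxc⟩ := hcol x hx hxw
    exact ha.1 x hxp hxc
  · obtain ⟨hcx, -⟩ | ⟨hxp, -, hiff⟩ := hwp x hx
    · exact hcS ⟨x, hcx, hxS⟩
    · exact ha.2 x hxp (fun hxc => hxw (hiff.2 hxc)) hxS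
  · refine (Set.ssubset_iff_of_subset ?_).2
      ⟨c, ⟨hcp, hccol, hcS⟩, fun ⟨hcw, hccolw, _⟩ => (hcol c hcw hccolw).2.1 rfl⟩
    rintro x ⟨hx, hxw, hxS⟩
    obtain ⟨hxp, -, hxc⟩ := hcol x hx hxw
    exact ⟨hxp, hxc, hxS⟩

theorem WeaklyActivePath.dConn (hacyc : Acyclic E) {S : Set V} {u v : V} {p : List V}
    (hp : IsPathBetween E u v p) (ha : WeaklyActivePath E S u p) : DConn E S u v := by
  by_cases hb : (blockingColliders E S p).Nonempty
  · obtain ⟨c, hc⟩ := hb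
    obtain ⟨w, hw, haw, hlt⟩ := exists_blockingColliders_ssubset hacyc hp ha hc
    have := Set.ncard_lt_ncard hlt (blockingColliders_finite S p)
    exact WeaklyActivePath.dConn hacyc hw haw
  · refine ⟨p, hp, fun x hx hxp => ?_, ha.2⟩
    by_contra hxS
    exact hb ⟨x, hx, hxp, hxS⟩
termination_by (blockingColliders E S p).ncard

lemma ActivePath.weaklyActivePath_of_reflTransGen {S : Set V} {z u : V} {p : List V}
    (hp : ActivePath E (S ∪ {z}) p) (hzu : ReflTransGen E z u) : WeaklyActivePath E S u p := by
  refine ⟨fun x hx hxp => ?_, fun x hx hxp hxS => hp.2 x hx hxp (Or.inl hxS)⟩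
  obtain ⟨d, hxd, hd | rfl⟩ := hp.1 x hx hxp
  · exact Or.inl ⟨d, hxd, hd⟩
  · exact Or.inr (hxd.trans hzu)

end

theorem endpoints_not_descendants_of_opened_collider_general {V : Type*}
    (E : V → V → Prop) (hacyc : Acyclic E)
    (S : Set V) (u v z : V)
    (hsep : DSep E S u v) (hconn : DConn E (S ∪ {z}) u v) :
    ¬ ReflTransGen E z u ∧ ¬ ReflTransGen E z v := by
  have key : ∀ {a b : V}, DSep E S a b → DConn E (S ∪ {z}) a b → ¬ ReflTransGen E z a :=
    fun hsep ⟨_, hp, ha⟩ hza => hsep ((ha.weaklyActivePath_of_reflTransGen hza).dConn hacyc hp)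
  exact ⟨key hsep hconn, key (fun h => hsep h.symm) hconn.symm⟩

/-- if `u ⫫ v ∣ S` but `u ⫫̸ v ∣ S ∪ {z}`, then neither `u` nor `v`
belongs to `Des[z]`. -/
theorem endpoints_not_descendants_of_opened_collider {V : Type*} [Fintype V]
    (E : V → V → Prop) (hacyc : Acyclic E)
    (S : Set V) (u v z : V) (hu : u ∉ S ∪ {z}) (hv : v ∉ S ∪ {z})
    (hsep : DSep E S u v) (hconn : DConn E (S ∪ {z}) u v) :
    ¬ ReflTransGen E z u ∧ ¬ ReflTransGen E z v :=
  endpoints_not_descendants_of_opened_collider_general E hacyc S u v z hsep hconn
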